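/- arXiv:2405.07002 — 4 statements merged into one kernel-verified Lean document; each statement's English description precedes it below -/
import Mathlib

section
/- Let R be a commutative ring, I an ideal of R, and f ∈ R. If m ∈ ℕ is such that the saturation I : f^∞ equals I : f^m, then I = (I : f^m) ∩ (I + ⟨f^m⟩). -/
namespace Ideal

variable {R : Type*} [CommRing R] {I : Ideal R} {a : R}

/- For `x = i + r a` with `i ∈ I`, `x a ∈ I` forces `r a² ∈ I`, hence `r a ∈ I` by `h`. -/
theorem colon_inf_sup_span_singleton_le (h : I.colon (span {a ^ 2}) ≤ I.colon (span {a})) :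
    I.colon (span {a}) ⊓ (I + span {a}) ≤ I := by
  intro x hx
  obtain ⟨hxa, hx⟩ := Submodule.mem_inf.mp hx
  obtain ⟨i, hi, _, hra, rfl⟩ := Submodule.mem_sup.mp hx
  obtain ⟨r, rfl⟩ := mem_span_singleton'.mp hra
  rw [mem_colon_span_singleton] at hxa
  have hr : r ∈ I.colon (span {a ^ 2}) := by
    rw [mem_colon_span_singleton,
      show r * a ^ 2 = (i + r * a) * a - i * a by ring]
    exact I.sub_mem hxa (I.mul_mem_right a hi)
  exact I.add_mem hi (mem_colon_span_singleton.mp (h hr))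

theorem eq_colon_inf_sup_span_singleton (h : I.colon (span {a ^ 2}) ≤ I.colon (span {a})) :
    I = I.colon (span {a}) ⊓ (I + span {a}) :=
  le_antisymm (le_inf le_colon le_sup_left) (colon_inf_sup_span_singleton_le h)

end Ideal

/-- If the saturation `I : f^∞` equals `I : f^m`, then `I = (I : f^m) ∩ (I + ⟨f^m⟩)`. -/
theorem stmt0 {R : Type*} [CommRing R] (I : Ideal R) (f : R) (m : ℕ)
    (h : (⨆ n : ℕ, I.colon (Ideal.span {f ^ n})) = I.colon (Ideal.span {f ^ m})) :
    I = I.colon (Ideal.span {f ^ m}) ⊓ (I + Ideal.span {f ^ m}) := by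
  refine Ideal.eq_colon_inf_sup_span_singleton ?_
  rw [← pow_mul, ← h]
  exact le_iSup (fun n ↦ I.colon (Ideal.span {f ^ n})) (m * 2)
end

section
/- Let A be a commutative ring, e₁, e₂ orthogonal idempotents with e₁ + e₂ = 1, and 𝒪 a subring of A such that e₁𝒪 and e₂𝒪 are contained in A. With J = (e₁𝒪 ∩ 𝒪) + (e₂𝒪 ∩ 𝒪) and φᵢ : eᵢ𝒪 → 𝒪/J as above, an element u = a₁ + a₂ with aᵢ ∈ eᵢ𝒪 is a unit of 𝒪 if and only if a₁ is a unit of the ring e₁𝒪, a₂ is a unit of e₂𝒪, and φ₁(a₁) = φ₂(a₂), φ₁(a₁⁻¹) = φ₂(a₂⁻¹). -/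
/-!
Multiplication by `e₁ + e₂ = 1` splits `A` into the corners `e₁A` and `e₂A`, and products of
elements `e₁a + e₂b` are computed corner by corner; so `e₁x + e₂y` has an inverse of the form
`e₁x' + e₂y'` exactly when `e₁x` and `e₂y` are invertible in their corners. The only issue is
membership in `𝒪`: since `e₁x + e₂y = x - e₂(x - y)` and `x - y = e₁(x - y) + e₂(x - y)`,
for `x, y ∈ 𝒪` the element `e₁x + e₂y` lies in `𝒪` iff `x - y ∈ J`.
-/

section

variable {A : Type*} [CommRing A] {e₁ e₂ : A}

theorem mul_self_eq_of_mul_eq_zero_of_add_eq_one (horth : e₁ * e₂ = 0) (hsum : e₁ + e₂ = 1) :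
    e₁ * e₁ = e₁ := by
  linear_combination e₁ * hsum - horth

theorem add_mul_add_eq_one_iff (horth : e₁ * e₂ = 0) (hsum : e₁ + e₂ = 1) (a b c d : A) :
    (e₁ * a + e₂ * b) * (e₁ * c + e₂ * d) = 1 ↔
      (e₁ * a) * (e₁ * c) = e₁ ∧ (e₂ * b) * (e₂ * d) = e₂ := by
  have he₁ := mul_self_eq_of_mul_eq_zero_of_add_eq_one horth hsum
  have he₂ := mul_self_eq_of_mul_eq_zero_of_add_eq_one (mul_comm e₁ e₂ ▸ horth)
    (add_comm e₁ e₂ ▸ hsum)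
  constructor
  · intro h
    constructor
    · linear_combination e₁ * h - e₁ * a * c * he₁ - (e₁ * (a * d + b * c) + e₂ * b * d) * horth
    · linear_combination e₂ * h - e₂ * b * d * he₂ - (e₂ * (a * d + b * c) + e₁ * a * c) * horth
  · rintro ⟨h₁, h₂⟩
    linear_combination h₁ + h₂ + (a * d + b * c) * horth + hsum

/-- The set `J = (e₁𝒪 ∩ 𝒪) + (e₂𝒪 ∩ 𝒪)`. -/
def Subring.cornerSum (O : Subring A) (e₁ e₂ : A) : Set A :=
  {y : A | ∃ c ∈ O, ∃ d ∈ O, (∃ c' ∈ O, c = e₁ * c') ∧ (∃ d' ∈ O, d = e₂ * d') ∧ y = c + d}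

theorem Subring.add_mul_mem_iff_sub_mem_cornerSum (horth : e₁ * e₂ = 0) (hsum : e₁ + e₂ = 1)
    {O : Subring A} {x y : A} (hx : x ∈ O) (hy : y ∈ O) :
    e₁ * x + e₂ * y ∈ O ↔ x - y ∈ O.cornerSum e₁ e₂ := by
  have hxy : x - y ∈ O := sub_mem hx hy
  constructor
  · intro hu
    refine ⟨e₁ * x + e₂ * y - y, sub_mem hu hy, x - (e₁ * x + e₂ * y), sub_mem hx hu,
      ⟨x - y, hxy, ?_⟩, ⟨x - y, hxy, ?_⟩, by ring⟩
    · linear_combination y * hsum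
    · linear_combination -x * hsum
  · rintro ⟨_, -, _, hd, ⟨c', -, rfl⟩, ⟨d', -, rfl⟩, hcd⟩
    have he₂ := mul_self_eq_of_mul_eq_zero_of_add_eq_one (mul_comm e₁ e₂ ▸ horth)
      (add_comm e₁ e₂ ▸ hsum)
    have hu : e₁ * x + e₂ * y = x - e₂ * d' := by
      linear_combination x * hsum - e₂ * hcd - c' * horth - d' * he₂
    exact hu ▸ sub_mem hx hd

end

/-- With `a₁ = e₁x`, `a₂ = e₂y`, `a₁⁻¹ = e₁x'`, `a₂⁻¹ = e₂y'`, the conditions `x - y ∈ J` and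
`x' - y' ∈ J` encode `φ₁(a₁) = φ₂(a₂)` and `φ₁(a₁⁻¹) = φ₂(a₂⁻¹)`. -/
theorem stmt8_general {A : Type*} [CommRing A] (e₁ e₂ : A)
    (horth : e₁ * e₂ = 0) (hsum : e₁ + e₂ = 1)
    (O : Subring A) (J : Set A)
    (hJ : J = {y : A | ∃ c ∈ O, ∃ d ∈ O, (∃ c' ∈ O, c = e₁ * c') ∧
      (∃ d' ∈ O, d = e₂ * d') ∧ y = c + d})
    (x y : A) (hx : x ∈ O) (hy : y ∈ O) (u : A) (hu : u = e₁ * x + e₂ * y) :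
    (u ∈ O ∧ ∃ v ∈ O, u * v = 1) ↔
      ((∃ x' ∈ O, ∃ y' ∈ O, (e₁ * x) * (e₁ * x') = e₁ ∧ (e₂ * y) * (e₂ * y') = e₂ ∧
        x' - y' ∈ J) ∧ x - y ∈ J) := by
  subst hu hJ
  rw [Subring.add_mul_mem_iff_sub_mem_cornerSum horth hsum hx hy]
  constructor
  · rintro ⟨hxy, v, hv, huv⟩
    have hv_split : e₁ * v + e₂ * v = v := by rw [← add_mul, hsum, one_mul]
    have hunits := (add_mul_add_eq_one_iff horth hsum x y v v).1 (by rwa [hv_split])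
    have hvv := (Subring.add_mul_mem_iff_sub_mem_cornerSum horth hsum hv hv).1 (by rwa [hv_split])
    exact ⟨⟨v, hv, v, hv, hunits.1, hunits.2, hvv⟩, hxy⟩
  · rintro ⟨⟨x', hx', y', hy', h₁, h₂, hxy'⟩, hxy⟩
    exact ⟨hxy, e₁ * x' + e₂ * y',
      (Subring.add_mul_mem_iff_sub_mem_cornerSum horth hsum hx' hy').2 hxy',
      (add_mul_add_eq_one_iff horth hsum x y x' y').2 ⟨h₁, h₂⟩⟩

/-- `u = e₁x + e₂y` is a unit of `𝒪` iff `e₁x` is a unit of `e₁𝒪`, `e₂y` is a unit of `e₂𝒪`,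
`φ₁(a₁) = φ₂(a₂)` (i.e. `x - y ∈ J`), and `φ₁(a₁⁻¹) = φ₂(a₂⁻¹)` (i.e. `x' - y' ∈ J`). -/
theorem stmt8 {A : Type*} [CommRing A] (e₁ e₂ : A)
    (he₁ : e₁ * e₁ = e₁) (he₂ : e₂ * e₂ = e₂)
    (horth : e₁ * e₂ = 0) (hsum : e₁ + e₂ = 1)
    (O : Subring A) (J : Set A)
    (hJ : J = {y : A | ∃ c ∈ O, ∃ d ∈ O, (∃ c' ∈ O, c = e₁ * c') ∧
      (∃ d' ∈ O, d = e₂ * d') ∧ y = c + d})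
    (x y : A) (hx : x ∈ O) (hy : y ∈ O) (u : A) (hu : u = e₁ * x + e₂ * y) :
    (u ∈ O ∧ ∃ v ∈ O, u * v = 1) ↔
      ((∃ x' ∈ O, ∃ y' ∈ O, (e₁ * x) * (e₁ * x') = e₁ ∧ (e₂ * y) * (e₂ * y') = e₂ ∧
        x' - y' ∈ J) ∧ x - y ∈ J) :=
  stmt8_general e₁ e₂ horth hsum O J hJ x y hx hy u hu
end

section
/- Let R be a commutative ring, f₁, …, f_k ∈ R^×, and let I, J be ideals of R with I ∩ J = (0). Then the exponent lattice of (f₁,…,f_k) in R equals the intersection of the exponent lattice of their images in R/I with the exponent lattice of their images in R/J. -/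
namespace Ideal

theorem Quotient.unitsMap_mk_eq_one_iff {R : Type*} [CommRing R] (K : Ideal R) (u : Rˣ) :
    Units.map (Quotient.mk K).toMonoidHom u = 1 ↔ (u : R) - 1 ∈ K := by
  rw [← Quotient.eq_zero_iff_mem, map_sub, map_one, sub_eq_zero, ← Units.val_eq_one]
  rfl

theorem units_eq_one_iff_of_inf_eq_bot {R : Type*} [CommRing R] {I J : Ideal R}
    (h : I ⊓ J = ⊥) (u : Rˣ) :
    u = 1 ↔ Units.map (Quotient.mk I).toMonoidHom u = 1 ∧
      Units.map (Quotient.mk J).toMonoidHom u = 1 := by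
  rw [Quotient.unitsMap_mk_eq_one_iff, Quotient.unitsMap_mk_eq_one_iff, ← Submodule.mem_inf, h,
    mem_bot, sub_eq_zero, Units.val_eq_one]

end Ideal

/-- If `I ∩ J = (0)`, then the exponent lattice in `R` is the intersection of the exponent
lattices in `R/I` and `R/J`. -/
theorem stmt16 {R : Type*} [CommRing R] (k : ℕ) (f : Fin k → Rˣ)
    (I J : Ideal R) (h : I ⊓ J = ⊥) :
    {a : Fin k → ℤ | ∏ i, f i ^ a i = 1} =
      {a : Fin k → ℤ |
          ∏ i, (Units.map (Ideal.Quotient.mk I).toMonoidHom (f i)) ^ a i = 1} ∩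
      {a : Fin k → ℤ |
          ∏ i, (Units.map (Ideal.Quotient.mk J).toMonoidHom (f i)) ^ a i = 1} := by
  ext a
  simp only [Set.mem_ofPred_eq, Set.mem_inter_iff, ← map_zpow, ← map_prod]
  exact Ideal.units_eq_one_iff_of_inf_eq_bot h _
end

section
/- Let R be a commutative ring, p a prime, and e ≥ 1. Let f₁, …, f_k ∈ R^× and let b₁, …, b_m ∈ ℤ^k generate the exponent lattice of the images of (f₁,…,f_k) in R/p^e R, with f^{bᵢ} = 1 + p^e gᵢ for elements gᵢ ∈ R. Suppose R is torsion-free as a ℤ-module. Then for a₁,…,a_m ∈ ℤ, the vector c = a₁b₁ + ⋯ + a_m b_m lies in the exponent lattice of (f₁,…,f_k) in R/p^{e+1}R if and only if a₁ ḡ₁ + ⋯ + a_m ḡ_m = 0 in R/pR. -/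
private lemma zpow_finset_sum {G : Type*} [CommGroup G] {ι : Type*} (x : G)
    (s : Finset ι) (c : ι → ℤ) : x ^ (∑ i ∈ s, c i) = ∏ i ∈ s, x ^ c i := by
  induction s using Finset.cons_induction with
  | empty => simp
  | cons i s hi ih => rw [Finset.sum_cons, Finset.prod_cons, zpow_add, ih]

private lemma sq_zero_pow {S : Type*} [CommRing S] (x : S) (hx : x * x = 0)
    (u : Sˣ) (hu : (u : S) = 1 + x) (n : ℕ) : ((u ^ n : Sˣ) : S) = 1 + n • x := by
  induction n with
  | zero => simp
  | succ n ih =>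
    rw [pow_succ, Units.val_mul, ih, hu, nsmul_eq_mul, nsmul_eq_mul]
    push_cast
    linear_combination (n : S) * hx

private lemma sq_zero_zpow {S : Type*} [CommRing S] (x : S) (hx : x * x = 0)
    (u : Sˣ) (hu : (u : S) = 1 + x) (n : ℤ) : ((u ^ n : Sˣ) : S) = 1 + n • x := by
  cases n with
  | ofNat n => rw [Int.ofNat_eq_coe, zpow_natCast, sq_zero_pow x hx u hu n]; simp
  | negSucc n =>
    rw [zpow_negSucc]
    have h1 : ((u ^ (n + 1) : Sˣ) : S) = 1 + (n + 1 : ℕ) • x := sq_zero_pow x hx u hu (n + 1)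
    have h2 : ((u ^ (n + 1) : Sˣ) : S) * (1 - (n + 1 : ℕ) • x) = 1 := by
      rw [h1, nsmul_eq_mul]
      push_cast
      linear_combination (-(n:S) - 1) * ((n:S) + 1) * hx
    rw [Units.inv_eq_of_mul_eq_one_right h2]
    rw [nsmul_eq_mul, zsmul_eq_mul]
    push_cast
    ring

private lemma prod_one_add_sq_zero {S : Type*} [CommRing S] {ι : Type*} (s : Finset ι)
    (t : S) (ht : t * t = 0) (y : ι → S) :
    ∏ i ∈ s, (1 + t * y i) = 1 + t * ∑ i ∈ s, y i := by
  induction s using Finset.cons_induction with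
  | empty => simp
  | cons i s hi ih =>
    rw [Finset.prod_cons, Finset.sum_cons, ih]
    linear_combination (y i * ∑ j ∈ s, y j) * ht

/-- Hensel-type lifting criterion: `c = ∑ aᵢbᵢ` lies in the exponent lattice mod `p^{e+1}`
iff `∑ aᵢ ḡᵢ = 0` in `R/pR`. -/
theorem stmt17 {R : Type*} [CommRing R] [NoZeroSMulDivisors ℤ R]
    (p : ℕ) (hp : p.Prime) (e : ℕ) (he : 1 ≤ e)
    (k m : ℕ) (f : Fin k → Rˣ) (b : Fin m → Fin k → ℤ) (g : Fin m → R)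
    (hg : ∀ i, ((∏ j, f j ^ b i j : Rˣ) : R) = 1 + (p : R) ^ e * g i)
    (hspan : (Submodule.span ℤ (Set.range b) : Set (Fin k → ℤ)) =
      {a : Fin k → ℤ | ∏ j,
        (Units.map (Ideal.Quotient.mk (Ideal.span {(p : R) ^ e})).toMonoidHom (f j)) ^ a j
          = 1})
    (a : Fin m → ℤ) :
    (∏ j, (Units.map
        (Ideal.Quotient.mk (Ideal.span {(p : R) ^ (e + 1)})).toMonoidHom (f j)) ^
          (∑ i, a i * b i j) = 1) ↔
      Ideal.Quotient.mk (Ideal.span {(p : R)}) (∑ i, a i • g i) = 0 := by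
  set I : Ideal R := Ideal.span {(p : R) ^ (e + 1)} with hI
  set q : R →+* R ⧸ I := Ideal.Quotient.mk I with hqdef
  set t : R ⧸ I := q ((p : R) ^ e) with htdef
  have ht : t * t = 0 := by
    rw [htdef, ← map_mul, ← pow_add]
    rw [Ideal.Quotient.eq_zero_iff_mem, hI, Ideal.mem_span_singleton]
    exact pow_dvd_pow _ (by omega)
  set v : Fin m → Rˣ := fun i => ∏ j, f j ^ b i j with hv
  -- Step 1: rewrite the LHS product
  have hswap : ∏ j, (Units.map q.toMonoidHom (f j)) ^ (∑ i, a i * b i j)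
      = ∏ i, (Units.map q.toMonoidHom (v i)) ^ a i := by
    have : ∀ j, (Units.map q.toMonoidHom (f j)) ^ (∑ i, a i * b i j)
        = ∏ i, ((Units.map q.toMonoidHom (f j)) ^ b i j) ^ a i := by
      intro j
      rw [zpow_finset_sum]
      refine Finset.prod_congr rfl fun i _ => ?_
      rw [← zpow_mul, mul_comm]
    rw [Finset.prod_congr rfl fun j _ => this j, Finset.prod_comm]
    refine Finset.prod_congr rfl fun i _ => ?_
    simp only [hv, map_prod, map_zpow]
    rw [← Finset.prod_zpow]
  have hxsq : ∀ i : Fin m, (t * q (g i)) * (t * q (g i)) = 0 := by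
    intro i
    calc (t * q (g i)) * (t * q (g i)) = (t * t) * (q (g i) * q (g i)) := by ring
    _ = 0 := by rw [ht, zero_mul]
  have huv : ∀ i : Fin m, ((Units.map q.toMonoidHom (v i) : (R ⧸ I)ˣ) : R ⧸ I)
      = 1 + t * q (g i) := by
    intro i
    rw [Units.coe_map]
    show q ((v i : R)) = _
    rw [hv]
    simp only []
    rw [hg i, map_add, map_one, map_mul, htdef]
  have hvala : ∀ i : Fin m, (((Units.map q.toMonoidHom (v i)) ^ a i : (R ⧸ I)ˣ) : R ⧸ I)
      = 1 + t * q (a i • g i) := by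
    intro i
    rw [sq_zero_zpow _ (hxsq i) _ (huv i) (a i)]
    rw [zsmul_eq_mul, map_zsmul, zsmul_eq_mul]
    ring
  have hprodval : ((∏ i, (Units.map q.toMonoidHom (v i)) ^ a i : (R ⧸ I)ˣ) : R ⧸ I)
      = 1 + t * q (∑ i, a i • g i) := by
    rw [← Units.coeHom_apply, map_prod]
    simp only [Units.coeHom_apply, hvala]
    rw [prod_one_add_sq_zero _ t ht, ← map_sum]
  rw [hswap, Units.ext_iff, Units.val_one, hprodval]
  have hstep : (1 + t * q (∑ i, a i • g i) = 1) ↔ q ((p : R) ^ e * ∑ i, a i • g i) = 0 := by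
    rw [map_mul, ← htdef]
    constructor
    · intro h; linear_combination h
    · intro h; linear_combination h
  rw [hstep, Ideal.Quotient.eq_zero_iff_mem, hI, Ideal.mem_span_singleton,
    Ideal.Quotient.eq_zero_iff_mem, Ideal.mem_span_singleton]
  set s : R := ∑ i, a i • g i
  constructor
  · rintro ⟨r, hr⟩
    refine ⟨r, ?_⟩
    have h0 : ((p : ℤ) ^ e) • (s - (p : R) * r) = 0 := by
      rw [zsmul_eq_mul]
      push_cast
      linear_combination hr
    rcases smul_eq_zero.mp h0 with h | h
    · exact absurd h (pow_ne_zero _ (by exact_mod_cast hp.ne_zero))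
    · exact sub_eq_zero.mp h
  · rintro ⟨r, hr⟩
    exact ⟨r, by rw [hr, pow_succ]; ring⟩
end
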